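/- Let R be a commutative ring, A an n×k matrix and G a k×n matrix over R with G·A = I_k (k < n). Suppose the kernel of the R-linear map v ↦ G·v on Rⁿ equals the image of an n×(n−k) matrix H, and define J := I_n − A·G. Then there exists an (n−k)×n matrix S over R with J = H·S, and the n×n block matrix F := (A | H) is invertible with inverse the block matrix formed by stacking G on top of S. -/

import Mathlib

namespace Matrix

variable {R : Type*} {l m n p : Type*} [Fintype m] [Fintype n]

theorem exists_eq_mul_of_mul_eq_zero [NonUnitalNonAssocSemiring R]
    {G : Matrix l m R} {H : Matrix m n R}
    (hker : ∀ v : m → R, G *ᵥ v = 0 → ∃ w : n → R, H *ᵥ w = v)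
    {M : Matrix m p R} (hGM : G * M = 0) : ∃ S : Matrix n p R, M = H * S := by
  have hcol (j : p) : ∃ w : n → R, H *ᵥ w = Mᵀ j :=
    hker _ (congrFun (congrArg transpose hGM) j)
  choose w hw using hcol
  exact ⟨(of w)ᵀ, by ext i j; exact (congrFun (hw j) i).symm⟩

theorem mul_one_sub_mul_eq_zero [Ring R] [DecidableEq m] [DecidableEq n] {A : Matrix m n R}
    {G : Matrix n m R} (hGA : G * A = 1) : G * (1 - A * G) = 0 := by
  rw [Matrix.mul_sub, Matrix.mul_one, ← Matrix.mul_assoc, hGA, Matrix.one_mul, sub_self]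

end Matrix

open Matrix

/-- Let `R` be a commutative ring, `A` an `n×k` matrix and `G` a `k×n` matrix over `R`
with `G * A = 1` (`k < n`).  Suppose the kernel of `v ↦ G.mulVec v` equals the image of an
`n×(n-k)` matrix `H`, and let `J := 1 - A * G`.  Then there is an `(n-k)×n` matrix `S`
with `J = H * S`, and the block matrix `F := (A | H)` is invertible with inverse the block
matrix obtained by stacking `G` on top of `S`. -/
theorem stmt_10 {R : Type*} [CommRing R] {n k : ℕ} (hk : k < n)
    (A : Matrix (Fin n) (Fin k) R) (G : Matrix (Fin k) (Fin n) R)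
    (hGA : G * A = 1)
    (H : Matrix (Fin n) (Fin (n - k)) R)
    (hker : ∀ v : Fin n → R, G.mulVec v = 0 ↔ ∃ w : Fin (n - k) → R, H.mulVec w = v) :
    ∃ S : Matrix (Fin (n - k)) (Fin n) R,
      (1 : Matrix (Fin n) (Fin n) R) - A * G = H * S ∧
      Matrix.fromCols A H * Matrix.fromRows G S = 1 ∧
      Matrix.fromRows G S * Matrix.fromCols A H = 1 := by
  obtain ⟨S, hS⟩ :=
    exists_eq_mul_of_mul_eq_zero (fun v => (hker v).1) (mul_one_sub_mul_eq_zero hGA)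
  have hFS : fromCols A H * fromRows G S = 1 := by
    rw [fromCols_mul_fromRows, ← hS, add_sub_cancel]
  have e : Fin n ≃ Fin k ⊕ Fin (n - k) :=
    (finCongr (Nat.add_sub_cancel' hk.le)).symm.trans finSumFinEquiv.symm
  exact ⟨S, hS, hFS, (fromCols_mul_fromRows_eq_one_comm e A H G S).1 hFS⟩
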